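/- Let A = P₁ − R₁ + S₁ = P₂ − R₂ + S₂ be two double proper weak regular splittings of a semi-monotone matrix A ∈ ℝ^{m×n}, and let A = P₃ − R₃ + S₃ be a double proper regular splitting with N(S₃) ⊇ N(P₃), R(S₃) ⊆ R(P₃), I − S₃Pᵢ† nonsingular and Âᵢ† ≥ 0 for i = 1, 2, where Â₁ = (I − S₃P₁†)A and Â₂ = (I − S₃P₂†)A. Setting P̂₁ = P̂₂ = P₃, R̂₁ = R₃ − S₃P₁†R₁, R̂₂ = R₃ − S₃P₂†R₂, if P̂₁†Â₁ ≥ P̂₂†Â₂ and P̂₁†R̂₁ ≥ P̂₂†R̂₂, then ρ(W₁₃) ≤ ρ(W₂₃) < 1. -/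

import Mathlib

/-!
Write `W = [[T, U], [1, 0]]` for the two iteration matrices, with `Tᵢ = X₃R₃ - X₃S₃XᵢRᵢ`,
`Uᵢ = X₃S₃XᵢSᵢ` (both nonnegative) and `Mᵢ = Tᵢ + Uᵢ`. Since `N(Pᵢ) ⊆ N(S₃)` forces `S₃XᵢPᵢ = S₃`,
`X₃(1 - S₃Xᵢ)A = X₃P₃ - Mᵢ`, so the two comparison hypotheses say `M₁ ≤ M₂` and `T₂ ≤ T₁`.
Because `(1 - S₃X₂)A` has the kernel and range of `P₃`, the Penrose equations give
`M₂Â₂† = Â₂† - X₃`. So the nonnegative series `∑ M₂ᵗX₃` telescopes below `Â₂†`, and as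
`M₂ = X₃(R₃ - S₃X₂R₂ + S₃X₂S₂)` this gives `M₂ᵗ → 0`, hence `M₁ᵗ → 0` by monotonicity.

An eigenvector `(x, y)` of `W` for `λ` has `x = λy` and `λ²y = λTy + Uy`, so `z = |y|` satisfies
`|λ|²z ≤ (|λ|T + U)z`. For `|λ| ≥ 1` this makes `z` a subeigenvector of `T + U` for a value `≥ 1`,
impossible when `(T + U)ᵗ → 0`; hence `ρ(W) < 1`. For an eigenvalue of `W₁₃`, `|λ| < 1` and
`M₁ ≤ M₂`, `T₂ ≤ T₁` give `|λ|T₁ + U₁ ≤ |λ|T₂ + U₂`, so `(|λ|z, z)` is a subeigenvector of `W₂₃` and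
the Collatz–Wielandt bound (a consequence of Gelfand's formula) yields `|λ| ≤ ρ(W₂₃)`.
-/

open Matrix

/-- Spectral radius of a real square matrix: the maximum modulus of its complex eigenvalues. -/
noncomputable def specRad {ι : Type*} [Fintype ι] [DecidableEq ι] (M : Matrix ι ι ℝ) : ℝ :=
  sSup ((fun z : ℂ => ‖z‖) '' spectrum ℂ (M.map Complex.ofReal))

/-- `X` satisfies the four Penrose equations for `A`, i.e. `X` is the Moore-Penrose
inverse of `A`. -/
def IsMP {m n : ℕ} (A : Matrix (Fin m) (Fin n) ℝ) (X : Matrix (Fin n) (Fin m) ℝ) : Prop :=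
  A * X * A = A ∧ X * A * X = X ∧ (A * X)ᵀ = A * X ∧ (X * A)ᵀ = X * A

/-- Entrywise comparison of matrices: `MatLE A B` means `A ≤ B` entrywise. -/
def MatLE {m n : ℕ} (A B : Matrix (Fin m) (Fin n) ℝ) : Prop := ∀ i j, A i j ≤ B i j

open Filter Topology

section NonnegMatrix

variable {ι κ μ : Type*} [Fintype κ]

lemma mul_entries_nonneg {A : Matrix ι κ ℝ} {B : Matrix κ μ ℝ} (hA : ∀ i j, 0 ≤ A i j)
    (hB : ∀ i j, 0 ≤ B i j) (i : ι) (j : μ) : 0 ≤ (A * B) i j :=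
  Finset.sum_nonneg fun l _ => mul_nonneg (hA i l) (hB l j)

lemma mulVec_le_mulVec_of_le {A B : Matrix ι κ ℝ} (hAB : ∀ i j, A i j ≤ B i j) {z : κ → ℝ}
    (hz : 0 ≤ z) : A *ᵥ z ≤ B *ᵥ z := fun i =>
  Finset.sum_le_sum fun j _ => mul_le_mul_of_nonneg_right (hAB i j) (hz j)

lemma mulVec_mono_of_nonneg {A : Matrix ι κ ℝ} (hA : ∀ i j, 0 ≤ A i j) {u w : κ → ℝ}
    (huw : u ≤ w) : A *ᵥ u ≤ A *ᵥ w := fun i =>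
  Finset.sum_le_sum fun j _ => mul_le_mul_of_nonneg_left (huw j) (hA i j)

variable [Fintype ι] [DecidableEq ι]

lemma pow_entries_nonneg {M : Matrix ι ι ℝ} (hM : ∀ i j, 0 ≤ M i j) (t : ℕ) :
    ∀ i j, 0 ≤ (M ^ t) i j := by
  induction t with
  | zero => intro i j; rw [pow_zero, Matrix.one_apply]; split_ifs <;> norm_num
  | succ t ih => rw [pow_succ]; exact mul_entries_nonneg ih hM

lemma pow_entries_le_pow {A B : Matrix ι ι ℝ} (hA : ∀ i j, 0 ≤ A i j)
    (hAB : ∀ i j, A i j ≤ B i j) (t : ℕ) : ∀ i j, (A ^ t) i j ≤ (B ^ t) i j := by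
  induction t with
  | zero => intro i j; rfl
  | succ t ih =>
    intro i j
    rw [pow_succ, pow_succ]
    refine Finset.sum_le_sum fun l _ => ?_
    exact mul_le_mul (ih i l) (hAB l j) (hA l j) ((pow_entries_nonneg hA t i l).trans (ih i l))

lemma pow_smul_le_pow_mulVec {M : Matrix ι ι ℝ} (hM : ∀ i j, 0 ≤ M i j) {c : ℝ} (hc : 0 ≤ c)
    {z : ι → ℝ} (h : c • z ≤ M *ᵥ z) (t : ℕ) : c ^ t • z ≤ (M ^ t) *ᵥ z := by
  induction t with
  | zero => simp
  | succ t ih =>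
    calc c ^ (t + 1) • z = c ^ t • (c • z) := by rw [pow_succ, mul_smul]
      _ ≤ c ^ t • (M *ᵥ z) := smul_le_smul_of_nonneg_left h (pow_nonneg hc t)
      _ = M *ᵥ (c ^ t • z) := by rw [Matrix.mulVec_smul]
      _ ≤ M *ᵥ ((M ^ t) *ᵥ z) := mulVec_mono_of_nonneg hM ih
      _ = (M ^ (t + 1)) *ᵥ z := by rw [Matrix.mulVec_mulVec, pow_succ']

end NonnegMatrix

section SpectralRadius

variable {ι : Type*} [Fintype ι] [DecidableEq ι]

lemma specRad_nonneg (M : Matrix ι ι ℝ) : 0 ≤ specRad M :=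
  Real.sSup_nonneg <| by rintro _ ⟨z, -, rfl⟩; exact norm_nonneg z

lemma finite_norm_spectrum (M : Matrix ι ι ℝ) :
    ((fun z : ℂ => ‖z‖) '' spectrum ℂ (M.map Complex.ofReal)).Finite :=
  (Matrix.finite_spectrum _).image _

lemma norm_le_specRad {M : Matrix ι ι ℝ} {z : ℂ} (hz : z ∈ spectrum ℂ (M.map Complex.ofReal)) :
    ‖z‖ ≤ specRad M :=
  le_csSup (finite_norm_spectrum M).bddAbove ⟨z, hz, rfl⟩

lemma specRad_le_of_forall_norm_le {M : Matrix ι ι ℝ} {c : ℝ} (hc : 0 ≤ c)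
    (h : ∀ z ∈ spectrum ℂ (M.map Complex.ofReal), ‖z‖ ≤ c) : specRad M ≤ c :=
  Real.sSup_le (by rintro _ ⟨z, hz, rfl⟩; exact h z hz) hc

lemma specRad_lt_of_forall_norm_lt {M : Matrix ι ι ℝ} {c : ℝ} (hc : 0 < c)
    (h : ∀ z ∈ spectrum ℂ (M.map Complex.ofReal), ‖z‖ < c) : specRad M < c := by
  rcases (spectrum ℂ (M.map Complex.ofReal)).eq_empty_or_nonempty with hempty | hne
  · rwa [specRad, hempty, Set.image_empty, Real.sSup_empty]
  · obtain ⟨z, hz, hzr⟩ := (hne.image _).csSup_mem (finite_norm_spectrum M)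
    rw [specRad, ← hzr]
    exact h z hz

lemma spectralRadius_le_ofReal_specRad (M : Matrix ι ι ℝ) :
    spectralRadius ℂ (M.map Complex.ofReal) ≤ ENNReal.ofReal (specRad M) :=
  iSup₂_le fun z hz => by
    rw [← ENNReal.ofReal_coe_nnreal, coe_nnnorm]
    exact ENNReal.ofReal_le_ofReal (norm_le_specRad hz)

section LinftyOpNorm

attribute [local instance] Matrix.linftyOpNormedRing Matrix.linftyOpNormedAlgebra

lemma le_specRad_of_pow_le_norm_pow {M : Matrix ι ι ℝ} {c : ℝ} (hc : 0 ≤ c)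
    (h : ∀ t : ℕ, c ^ t ≤ ‖(M.map Complex.ofReal) ^ t‖) : c ≤ specRad M := by
  have gelfand := spectrum.pow_norm_pow_one_div_tendsto_nhds_spectralRadius (M.map Complex.ofReal)
  have hc_le : ENNReal.ofReal c ≤ spectralRadius ℂ (M.map Complex.ofReal) := by
    refine ge_of_tendsto gelfand ((eventually_ge_atTop 1).mono fun t ht => ?_)
    refine ENNReal.ofReal_le_ofReal ?_
    have ht : (t : ℝ) ≠ 0 := by positivity
    calc c = (c ^ t) ^ (1 / (t : ℝ)) := by
          rw [← Real.rpow_natCast, ← Real.rpow_mul hc, mul_one_div_cancel ht, Real.rpow_one]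
      _ ≤ _ := Real.rpow_le_rpow (by positivity) (h t) (by positivity)
  exact (ENNReal.ofReal_le_ofReal_iff (specRad_nonneg M)).1
    (hc_le.trans (spectralRadius_le_ofReal_specRad M))

lemma linfty_opNorm_map_ofReal (M : Matrix ι ι ℝ) : ‖M.map Complex.ofReal‖ = ‖M‖ := by
  simp [← coe_nnnorm, Matrix.linfty_opNNNorm_def, Complex.nnnorm_real]

lemma le_linfty_opNorm_of_smul_le_mulVec {M : Matrix ι ι ℝ} {c : ℝ} (hc : 0 ≤ c) {z : ι → ℝ}
    (hz : 0 ≤ z) (hz0 : z ≠ 0) (h : c • z ≤ M *ᵥ z) : c ≤ ‖M‖ := by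
  have hcz : c * ‖z‖ ≤ ‖M *ᵥ z‖ := by
    rw [← Real.norm_of_nonneg hc, ← norm_smul]
    refine (pi_norm_le_iff_of_nonneg (norm_nonneg _)).2 fun i => ?_
    rw [Real.norm_of_nonneg (smul_nonneg hc hz i)]
    exact (h i).trans ((le_abs_self _).trans (norm_le_pi_norm (M *ᵥ z) i))
  exact le_of_mul_le_mul_right (hcz.trans (Matrix.linfty_opNorm_mulVec M z)) (norm_pos_iff.2 hz0)

lemma le_specRad_of_smul_le_mulVec {M : Matrix ι ι ℝ} (hM : ∀ i j, 0 ≤ M i j) {c : ℝ}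
    (hc : 0 ≤ c) {z : ι → ℝ} (hz : 0 ≤ z) (hz0 : z ≠ 0) (h : c • z ≤ M *ᵥ z) : c ≤ specRad M := by
  refine le_specRad_of_pow_le_norm_pow hc fun t => ?_
  have hmap : M.map Complex.ofReal ^ t = (M ^ t).map Complex.ofReal :=
    (map_pow Complex.ofRealHom.mapMatrix M t).symm
  rw [hmap, linfty_opNorm_map_ofReal]
  exact le_linfty_opNorm_of_smul_le_mulVec (pow_nonneg hc t) hz hz0
    (pow_smul_le_pow_mulVec hM hc h t)

end LinftyOpNorm

end SpectralRadius

section PowersTendstoZero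

variable {ι κ : Type*} [Fintype κ]

lemma tendsto_mulVec_zero_of_tendsto_entries {N : ℕ → Matrix ι κ ℝ}
    (hN : ∀ i j, Tendsto (fun t => N t i j) atTop (𝓝 0)) (z : κ → ℝ) (i : ι) :
    Tendsto (fun t => (N t *ᵥ z) i) atTop (𝓝 0) := by
  simpa [Matrix.mulVec, dotProduct] using
    tendsto_finsetSum Finset.univ fun j _ => (hN i j).mul_const (z j)

variable [Fintype ι] [DecidableEq ι]

lemma tendsto_pow_entries_zero_of_le {A B : Matrix ι ι ℝ} (hA : ∀ i j, 0 ≤ A i j)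
    (hAB : ∀ i j, A i j ≤ B i j) (hB : ∀ i j, Tendsto (fun t => (B ^ t) i j) atTop (𝓝 0))
    (i j : ι) : Tendsto (fun t => (A ^ t) i j) atTop (𝓝 0) :=
  squeeze_zero (fun t => pow_entries_nonneg hA t i j) (fun t => pow_entries_le_pow hA hAB t i j)
    (hB i j)

lemma tendsto_pow_entries_zero {M : Matrix ι ι ℝ} {X Y : Matrix ι κ ℝ} {G : Matrix κ ι ℝ}
    (hM : ∀ i j, 0 ≤ M i j) (hX : ∀ i j, 0 ≤ X i j) (hY : ∀ i j, 0 ≤ Y i j)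
    (hMY : M * Y = Y - X) (hMX : M = X * G) (i j : ι) :
    Tendsto (fun t => (M ^ t) i j) atTop (𝓝 0) := by
  have telescope : ∀ K, ∑ t ∈ Finset.range K, M ^ t * X = Y - M ^ K * Y := by
    intro K
    induction K with
    | zero => simp
    | succ K ih =>
      rw [Finset.sum_range_succ, ih, pow_succ, Matrix.mul_assoc, hMY, Matrix.mul_sub]
      abel
  have hpowX : ∀ i l, Tendsto (fun t => (M ^ t * X : Matrix ι κ ℝ) i l) atTop (𝓝 0) := by
    intro i l
    refine (summable_of_sum_range_le (c := Y i l)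
      (fun t => mul_entries_nonneg (pow_entries_nonneg hM t) hX i l) fun K => ?_).tendsto_atTop_zero
    have h := congrFun (congrFun (telescope K) i) l
    rw [Matrix.sum_apply, Matrix.sub_apply] at h
    linarith [mul_entries_nonneg (pow_entries_nonneg hM K) hY i l]
  have hsucc : Tendsto (fun t => (M ^ (t + 1)) i j) atTop (𝓝 0) := by
    have hpow : ∀ t, (M ^ (t + 1)) i j = ((M ^ t * X) *ᵥ fun l => G l j) i := fun t => by
      rw [pow_succ, hMX, ← Matrix.mul_assoc]; rfl
    simpa only [hpow] using tendsto_mulVec_zero_of_tendsto_entries hpowX (fun l => G l j) i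
  exact (tendsto_add_atTop_iff_nat 1).1 hsucc

end PowersTendstoZero

section CompanionBlocks

variable {ι κ : Type*} [Fintype κ]

lemma norm_map_ofReal_mulVec_le {N : Matrix ι κ ℝ} (hN : ∀ i j, 0 ≤ N i j) (w : κ → ℂ) (i : ι) :
    ‖(N.map Complex.ofReal *ᵥ w) i‖ ≤ (N *ᵥ fun j => ‖w j‖) i := by
  refine (norm_sum_le _ _).trans (le_of_eq (Finset.sum_congr rfl fun j _ => ?_))
  change ‖(N i j : ℂ) * w j‖ = N i j * ‖w j‖
  rw [norm_mul, Complex.norm_real, Real.norm_of_nonneg (hN i j)]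

variable [DecidableEq ι] {T U : Matrix ι ι ℝ}

lemma fromBlocks_entries_nonneg (hT : ∀ i j, 0 ≤ T i j) (hU : ∀ i j, 0 ≤ U i j) :
    ∀ i j, 0 ≤ fromBlocks T U (1 : Matrix ι ι ℝ) 0 i j := by
  rintro (i | i) (j | j)
  · exact hT i j
  · exact hU i j
  · rw [fromBlocks_apply₂₁, Matrix.one_apply]; split_ifs <;> norm_num
  · exact le_rfl

variable [Fintype ι]

lemma exists_mulVec_eq_smul_of_mem_spectrum {M : Matrix ι ι ℂ} {μ : ℂ} (h : μ ∈ spectrum ℂ M) :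
    ∃ v ≠ 0, M *ᵥ v = μ • v := by
  rw [← Matrix.spectrum_toLin', ← Module.End.hasEigenvalue_iff_mem_spectrum] at h
  obtain ⟨v, hv⟩ := h.exists_hasEigenvector
  exact ⟨v, hv.2, hv.apply_eq_smul⟩

lemma exists_sq_smul_le_of_mem_spectrum_fromBlocks (hT : ∀ i j, 0 ≤ T i j)
    (hU : ∀ i j, 0 ≤ U i j) {μ : ℂ}
    (hμ : μ ∈ spectrum ℂ ((fromBlocks T U (1 : Matrix ι ι ℝ) 0).map Complex.ofReal)) :
    ∃ z : ι → ℝ, 0 ≤ z ∧ z ≠ 0 ∧ ‖μ‖ ^ 2 • z ≤ (‖μ‖ • T + U) *ᵥ z := by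
  obtain ⟨v, hv0, hv⟩ := exists_mulVec_eq_smul_of_mem_spectrum hμ
  rw [fromBlocks_map, Matrix.map_one _ Complex.ofReal_zero Complex.ofReal_one,
    Matrix.map_zero _ Complex.ofReal_zero, fromBlocks_mulVec, Matrix.one_mulVec,
    Matrix.zero_mulVec, add_zero] at hv
  set x := v ∘ Sum.inl
  set y := v ∘ Sum.inr
  have hx : x = μ • y := funext fun i => by simpa [y] using congrFun hv (Sum.inr i)
  have hy : T.map Complex.ofReal *ᵥ x + U.map Complex.ofReal *ᵥ y = μ • x :=
    funext fun i => by simpa [x] using congrFun hv (Sum.inl i)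
  refine ⟨fun i => ‖y i‖, fun i => norm_nonneg _, fun hy0 => hv0 ?_, fun i => ?_⟩
  · have hy0 : y = 0 := funext fun i => norm_eq_zero.1 (congrFun hy0 i)
    have hx0 : x = 0 := by rw [hx, hy0, smul_zero]
    ext (i | i)
    · exact congrFun hx0 i
    · exact congrFun hy0 i
  · have hxz : (fun j => ‖x j‖) = ‖μ‖ • fun j => ‖y j‖ := by
      ext j; simp [hx]
    calc (‖μ‖ ^ 2 • fun j => ‖y j‖) i = ‖(μ • x) i‖ := by simp [hx, pow_two, mul_assoc]
      _ = ‖(T.map Complex.ofReal *ᵥ x) i + (U.map Complex.ofReal *ᵥ y) i‖ := by rw [← hy]; rfl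
      _ ≤ (T *ᵥ fun j => ‖x j‖) i + (U *ᵥ fun j => ‖y j‖) i :=
        (norm_add_le _ _).trans (add_le_add (norm_map_ofReal_mulVec_le hT x i)
          (norm_map_ofReal_mulVec_le hU y i))
      _ = ((‖μ‖ • T + U) *ᵥ fun j => ‖y j‖) i := by
        rw [hxz, Matrix.add_mulVec, Matrix.mulVec_smul, Matrix.smul_mulVec]; rfl

lemma le_specRad_fromBlocks (hT : ∀ i j, 0 ≤ T i j) (hU : ∀ i j, 0 ≤ U i j) {c : ℝ} (hc : 0 ≤ c)
    {z : ι → ℝ} (hz : 0 ≤ z) (hz0 : z ≠ 0) (h : c ^ 2 • z ≤ (c • T + U) *ᵥ z) :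
    c ≤ specRad (fromBlocks T U (1 : Matrix ι ι ℝ) 0) := by
  refine le_specRad_of_smul_le_mulVec (fromBlocks_entries_nonneg hT hU) hc
    (z := Sum.elim (c • z) z) ?_ (fun h0 => hz0 (funext fun i => congrFun h0 (Sum.inr i))) ?_
  · rintro (i | i)
    exacts [mul_nonneg hc (hz i), hz i]
  · rw [fromBlocks_mulVec]
    rintro (i | i)
    · simpa [Matrix.add_mulVec, Matrix.smul_mulVec, Matrix.mulVec_smul, pow_two, mul_assoc]
        using h i
    · simp

lemma norm_lt_one_of_mem_spectrum_fromBlocks (hT : ∀ i j, 0 ≤ T i j) (hU : ∀ i j, 0 ≤ U i j)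
    (hpow : ∀ i j, Tendsto (fun t => ((T + U) ^ t) i j) atTop (𝓝 0)) {μ : ℂ}
    (hμ : μ ∈ spectrum ℂ ((fromBlocks T U (1 : Matrix ι ι ℝ) 0).map Complex.ofReal)) : ‖μ‖ < 1 := by
  by_contra! hμ1
  obtain ⟨z, hz, hz0, hsub⟩ := exists_sq_smul_le_of_mem_spectrum_fromBlocks hT hU hμ
  have hTU : ∀ i j, 0 ≤ (T + U) i j := fun i j => add_nonneg (hT i j) (hU i j)
  have hsub' : ‖μ‖ • z ≤ (T + U) *ᵥ z := by
    refine (smul_le_smul_iff_of_pos_left (one_pos.trans_le hμ1)).1 ?_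
    calc ‖μ‖ • ‖μ‖ • z = ‖μ‖ ^ 2 • z := by rw [smul_smul, pow_two]
      _ ≤ (‖μ‖ • T + U) *ᵥ z := hsub
      _ ≤ (‖μ‖ • (T + U)) *ᵥ z := mulVec_le_mulVec_of_le (fun i j => by
          simpa [mul_add] using le_mul_of_one_le_left (hU i j) hμ1) hz
      _ = ‖μ‖ • ((T + U) *ᵥ z) := Matrix.smul_mulVec _ _ _
  have hz_le : ∀ t, z ≤ ((T + U) ^ t) *ᵥ z := fun t =>
    (le_smul_of_one_le_left hz (one_le_pow₀ hμ1)).trans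
      (pow_smul_le_pow_mulVec hTU (norm_nonneg μ) hsub' t)
  exact hz0 (le_antisymm (fun i => ge_of_tendsto' (tendsto_mulVec_zero_of_tendsto_entries hpow z i)
    fun t => hz_le t i) hz)

lemma specRad_fromBlocks_lt_one (hT : ∀ i j, 0 ≤ T i j) (hU : ∀ i j, 0 ≤ U i j)
    (hpow : ∀ i j, Tendsto (fun t => ((T + U) ^ t) i j) atTop (𝓝 0)) :
    specRad (fromBlocks T U (1 : Matrix ι ι ℝ) 0) < 1 :=
  specRad_lt_of_forall_norm_lt one_pos fun _ hμ =>
    norm_lt_one_of_mem_spectrum_fromBlocks hT hU hpow hμ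

lemma specRad_fromBlocks_le_specRad_fromBlocks {T₁ U₁ T₂ U₂ : Matrix ι ι ℝ}
    (hT₁ : ∀ i j, 0 ≤ T₁ i j) (hU₁ : ∀ i j, 0 ≤ U₁ i j)
    (hT₂ : ∀ i j, 0 ≤ T₂ i j) (hU₂ : ∀ i j, 0 ≤ U₂ i j)
    (hT : ∀ i j, T₂ i j ≤ T₁ i j) (hTU : ∀ i j, (T₁ + U₁) i j ≤ (T₂ + U₂) i j)
    (hpow₁ : ∀ i j, Tendsto (fun t => ((T₁ + U₁) ^ t) i j) atTop (𝓝 0)) :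
    specRad (fromBlocks T₁ U₁ (1 : Matrix ι ι ℝ) 0) ≤
      specRad (fromBlocks T₂ U₂ (1 : Matrix ι ι ℝ) 0) := by
  refine specRad_le_of_forall_norm_le (specRad_nonneg _) fun μ hμ => ?_
  have hμ1 := norm_lt_one_of_mem_spectrum_fromBlocks hT₁ hU₁ hpow₁ hμ
  obtain ⟨z, hz, hz0, hsub⟩ := exists_sq_smul_le_of_mem_spectrum_fromBlocks hT₁ hU₁ hμ
  refine le_specRad_fromBlocks hT₂ hU₂ (norm_nonneg μ) hz hz0
    (hsub.trans (mulVec_le_mulVec_of_le (fun i j => ?_) hz))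
  have h₁ := hT i j
  have h₂ := hTU i j
  simp only [Matrix.add_apply, Matrix.smul_apply, smul_eq_mul] at h₂ ⊢
  nlinarith

end CompanionBlocks

section MoorePenrose

open LinearMap (ker range)

section General

variable {K : Type*} [CommRing K] {l m n : Type*} [Fintype m] [Fintype n]

lemma mul_mul_eq_of_ker_le {P : Matrix m n K} {X : Matrix n m K} {B : Matrix l n K}
    (hX : P * X * P = P) (h : ker P.mulVecLin ≤ ker B.mulVecLin) : B * X * P = B := by
  refine Matrix.ext_iff_mulVec.2 fun v => ?_
  have hv : v - (X * P) *ᵥ v ∈ ker P.mulVecLin := by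
    rw [LinearMap.mem_ker, Matrix.mulVecLin_apply, Matrix.mulVec_sub, Matrix.mulVec_mulVec,
      ← Matrix.mul_assoc, hX, sub_self]
  have hBv := h hv
  rw [LinearMap.mem_ker, Matrix.mulVecLin_apply, Matrix.mulVec_sub, Matrix.mulVec_mulVec,
    sub_eq_zero, ← Matrix.mul_assoc] at hBv
  exact hBv.symm

lemma mul_mul_eq_of_range_le [Fintype l] {B : Matrix m n K} {Y : Matrix n m K} {P : Matrix m l K}
    (hY : B * Y * B = B) (h : range P.mulVecLin ≤ range B.mulVecLin) : B * Y * P = P := by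
  refine Matrix.ext_iff_mulVec.2 fun v => ?_
  obtain ⟨w, hw⟩ := h ⟨v, rfl⟩
  simp only [Matrix.mulVecLin_apply] at hw
  rw [← Matrix.mulVec_mulVec, ← hw, Matrix.mulVec_mulVec, hY]

lemma mul_eq_left_iff_mul_eq_right_of_transpose_eq {E F : Matrix n n K} (hE : Eᵀ = E)
    (hF : Fᵀ = F) : F * E = F ↔ E * F = F := by
  have hFE : (F * E)ᵀ = E * F := by rw [Matrix.transpose_mul, hE, hF]
  constructor
  · intro h; rw [← hFE, h, hF]
  · intro h; rw [← Matrix.transpose_transpose (F * E), hFE, h, hF]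

lemma mul_one_sub_mul_mul_eq [DecidableEq m] {A P R S P₃ R₃ S₃ : Matrix m n K} {X X₃ : Matrix n m K}
    (hX : P * X * P = P) (hker : ker P.mulVecLin ≤ ker S₃.mulVecLin)
    (hsplit : A = P - R + S) (hsplit₃ : A = P₃ - R₃ + S₃) :
    X₃ * ((1 - S₃ * X) * A) = X₃ * P₃ - ((X₃ * R₃ - X₃ * S₃ * X * R) + X₃ * S₃ * X * S) := by
  have hSXA : S₃ * X * A = S₃ - S₃ * X * R + S₃ * X * S := by
    rw [hsplit, Matrix.mul_add, Matrix.mul_sub, mul_mul_eq_of_ker_le hX hker]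
  rw [Matrix.sub_mul, Matrix.one_mul, Matrix.mul_sub, hSXA]
  nth_rewrite 1 [hsplit₃]
  simp only [Matrix.mul_sub, Matrix.mul_add, Matrix.mul_assoc]
  abel

end General

variable {m n : ℕ}

lemma range_le_range_one_sub_mul_mul {A S : Matrix (Fin m) (Fin n) ℝ} {X : Matrix (Fin n) (Fin m) ℝ}
    (hS : range S.mulVecLin ≤ range A.mulVecLin) (hunit : IsUnit (1 - S * X)) :
    range A.mulVecLin ≤ range ((1 - S * X) * A).mulVecLin := by
  have hle : range ((1 - S * X) * A).mulVecLin ≤ range A.mulVecLin := by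
    rintro _ ⟨v, rfl⟩
    rw [Matrix.mulVecLin_apply, Matrix.sub_mul, Matrix.one_mul, Matrix.sub_mulVec,
      ← Matrix.mulVec_mulVec, ← Matrix.mulVec_mulVec]
    exact sub_mem ⟨v, rfl⟩ (hS ⟨_, rfl⟩)
  have hrank :=
    Matrix.rank_mul_eq_right_of_isUnit_det _ A ((Matrix.isUnit_iff_isUnit_det _).1 hunit)
  exact (Submodule.eq_of_le_of_finrank_le hle hrank.ge).ge

lemma IsMP.mul_mul_eq_of_ker_le_of_range_le {P B : Matrix (Fin m) (Fin n) ℝ}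
    {X Y : Matrix (Fin n) (Fin m) ℝ} (hX : IsMP P X) (hY : IsMP B Y)
    (hker : ker P.mulVecLin ≤ ker B.mulVecLin) (hrange : range P.mulVecLin ≤ range B.mulVecLin) :
    X * P * Y = Y ∧ X * B * Y = X := by
  have hXPYB : X * P * (Y * B) = Y * B :=
    (mul_eq_left_iff_mul_eq_right_of_transpose_eq hX.2.2.2 hY.2.2.2).1 <| by
      rw [← Matrix.mul_assoc, Matrix.mul_assoc Y B X, Matrix.mul_assoc Y (B * X) P,
        mul_mul_eq_of_ker_le hX.1 hker]
  have hPXBY : P * X * (B * Y) = P * X :=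
    (mul_eq_left_iff_mul_eq_right_of_transpose_eq hY.2.2.1 hX.2.2.1).2 <| by
      rw [← Matrix.mul_assoc, mul_mul_eq_of_range_le hY.1 hrange]
  constructor
  · calc X * P * Y = X * P * (Y * B) * Y := by rw [Matrix.mul_assoc _ (Y * B), hY.2.1]
      _ = Y := by rw [hXPYB, hY.2.1]
  · calc X * B * Y = X * P * X * B * Y := by rw [hX.2.1]
      _ = X * (P * X * (B * Y)) := by simp only [Matrix.mul_assoc]
      _ = X := by rw [hPXBY, ← Matrix.mul_assoc, hX.2.1]

lemma induced_blocks_nonneg {R₃ S₃ R S : Matrix (Fin m) (Fin n) ℝ} {X₃ X : Matrix (Fin n) (Fin m) ℝ}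
    (hX₃ : MatLE 0 X₃) (hR₃ : MatLE 0 R₃) (hS₃ : MatLE S₃ 0) (hXR : MatLE 0 (X * R))
    (hXS : MatLE (X * S) 0) :
    (∀ i j, 0 ≤ (X₃ * R₃ - X₃ * S₃ * X * R) i j) ∧ ∀ i j, 0 ≤ (X₃ * S₃ * X * S) i j := by
  have hX₃S₃ : ∀ i j, 0 ≤ (X₃ * -S₃) i j :=
    mul_entries_nonneg hX₃ fun i j => neg_nonneg.2 (hS₃ i j)
  constructor
  · have e : X₃ * R₃ - X₃ * S₃ * X * R = X₃ * R₃ + X₃ * -S₃ * (X * R) := by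
      simp only [Matrix.mul_neg, Matrix.neg_mul, Matrix.mul_assoc, sub_eq_add_neg]
    intro i j
    rw [e, Matrix.add_apply]
    exact add_nonneg (mul_entries_nonneg hX₃ hR₃ i j) (mul_entries_nonneg hX₃S₃ hXR i j)
  · have e : X₃ * S₃ * X * S = X₃ * -S₃ * -(X * S) := by
      simp only [Matrix.mul_neg, Matrix.neg_mul, Matrix.mul_assoc, neg_neg]
    rw [e]
    exact mul_entries_nonneg hX₃S₃ fun i j => neg_nonneg.2 (hXS i j)

end MoorePenrose

theorem tgads_pair_comparison_W13_W23_induced_general {m n : ℕ}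
    (A P₁ R₁ S₁ P₂ R₂ S₂ P₃ R₃ S₃ : Matrix (Fin m) (Fin n) ℝ)
    (X₁ X₂ X₃ Xhat₂ : Matrix (Fin n) (Fin m) ℝ)
    (hX₁ : IsMP P₁ X₁)
    (hX₂ : IsMP P₂ X₂)
    (hX₃ : IsMP P₃ X₃)
    (hsplit₁ : A = P₁ - R₁ + S₁)
    (hker₁ : LinearMap.ker (P₁).mulVecLin = LinearMap.ker (A).mulVecLin)
    (hwr₁b : MatLE 0 (X₁ * R₁))
    (hwr₁c : MatLE (X₁ * S₁) 0)
    (hsplit₂ : A = P₂ - R₂ + S₂)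
    (hker₂ : LinearMap.ker (P₂).mulVecLin = LinearMap.ker (A).mulVecLin)
    (hwr₂b : MatLE 0 (X₂ * R₂))
    (hwr₂c : MatLE (X₂ * S₂) 0)
    (hsplit₃ : A = P₃ - R₃ + S₃)
    (hrange₃ : LinearMap.range (P₃).mulVecLin = LinearMap.range (A).mulVecLin)
    (hker₃ : LinearMap.ker (P₃).mulVecLin = LinearMap.ker (A).mulVecLin)
    (hreg₃a : MatLE 0 X₃)
    (hreg₃b : MatLE 0 R₃)
    (hreg₃c : MatLE S₃ 0)
    (hNS3 : LinearMap.ker (P₃).mulVecLin ≤ LinearMap.ker (S₃).mulVecLin)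
    (hRS3 : LinearMap.range (S₃).mulVecLin ≤ LinearMap.range (P₃).mulVecLin)
    (hunit2 : IsUnit (1 - S₃ * X₂))
    (hXhat2 : IsMP ((1 - S₃ * X₂) * A) Xhat₂)
    (hXhat2pos : MatLE 0 Xhat₂)
    (hc1 : MatLE (X₃ * ((1 - S₃ * X₂) * A)) (X₃ * ((1 - S₃ * X₁) * A)))
    (hc2 : MatLE (X₃ * (R₃ - S₃ * X₂ * R₂)) (X₃ * (R₃ - S₃ * X₁ * R₁)))
    : specRad (Matrix.fromBlocks (X₃ * R₃ - X₃ * S₃ * X₁ * R₁) (X₃ * S₃ * X₁ * S₁) 1 0) ≤ specRad (Matrix.fromBlocks (X₃ * R₃ - X₃ * S₃ * X₂ * R₂) (X₃ * S₃ * X₂ * S₂) 1 0) ∧ specRad (Matrix.fromBlocks (X₃ * R₃ - X₃ * S₃ * X₂ * R₂) (X₃ * S₃ * X₂ * S₂) 1 0) < 1 := by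
  obtain ⟨hT₁, hU₁⟩ := induced_blocks_nonneg hreg₃a hreg₃b hreg₃c hwr₁b hwr₁c
  obtain ⟨hT₂, hU₂⟩ := induced_blocks_nonneg hreg₃a hreg₃b hreg₃c hwr₂b hwr₂c
  have hB₁ := mul_one_sub_mul_mul_eq (X₃ := X₃) hX₁.1 (hker₁ ▸ hker₃ ▸ hNS3) hsplit₁ hsplit₃
  have hB₂ := mul_one_sub_mul_mul_eq (X₃ := X₃) hX₂.1 (hker₂ ▸ hker₃ ▸ hNS3) hsplit₂ hsplit₃
  set T₁ := X₃ * R₃ - X₃ * S₃ * X₁ * R₁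
  set U₁ := X₃ * S₃ * X₁ * S₁
  set T₂ := X₃ * R₃ - X₃ * S₃ * X₂ * R₂
  set U₂ := X₃ * S₃ * X₂ * S₂
  have hM : ∀ i j, (T₁ + U₁) i j ≤ (T₂ + U₂) i j := fun i j => by
    have h := hc1 i j
    rw [hB₁, hB₂, Matrix.sub_apply, Matrix.sub_apply] at h
    linarith
  have hT : ∀ i j, T₂ i j ≤ T₁ i j := fun i j => by
    simpa only [T₁, T₂, Matrix.mul_sub, Matrix.mul_assoc] using hc2 i j
  obtain ⟨hPY, hBY⟩ := hX₃.mul_mul_eq_of_ker_le_of_range_le hXhat2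
    (by rw [hker₃, Matrix.mulVecLin_mul]; exact LinearMap.ker_le_ker_comp _ _)
    (hrange₃ ▸ range_le_range_one_sub_mul_mul (hrange₃ ▸ hRS3) hunit2)
  have hpow₂ := tendsto_pow_entries_zero (M := T₂ + U₂) (G := R₃ - S₃ * X₂ * R₂ + S₃ * X₂ * S₂)
    (fun i j => add_nonneg (hT₂ i j) (hU₂ i j)) hreg₃a hXhat2pos
    (by rw [← sub_sub_cancel (X₃ * P₃) (T₂ + U₂), ← hB₂, Matrix.sub_mul, hPY, hBY])
    (by simp only [T₂, U₂, Matrix.mul_add, Matrix.mul_sub, Matrix.mul_assoc])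
  exact ⟨specRad_fromBlocks_le_specRad_fromBlocks hT₁ hU₁ hT₂ hU₂ hT hM
      (tendsto_pow_entries_zero_of_le (fun i j => add_nonneg (hT₁ i j) (hU₁ i j)) hM hpow₂),
    specRad_fromBlocks_lt_one hT₂ hU₂ hpow₂⟩

theorem tgads_pair_comparison_W13_W23_induced {m n : ℕ}
    (A P₁ R₁ S₁ P₂ R₂ S₂ P₃ R₃ S₃ : Matrix (Fin m) (Fin n) ℝ)
    (XA X₁ X₂ X₃ Xhat₁ Xhat₂ : Matrix (Fin n) (Fin m) ℝ)
    (hX₁ : IsMP P₁ X₁)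
    (hX₂ : IsMP P₂ X₂)
    (hX₃ : IsMP P₃ X₃)
    (hXA : IsMP A XA)
    (hsemi : MatLE 0 XA)
    (hsplit₁ : A = P₁ - R₁ + S₁)
    (hrange₁ : LinearMap.range (P₁).mulVecLin = LinearMap.range (A).mulVecLin)
    (hker₁ : LinearMap.ker (P₁).mulVecLin = LinearMap.ker (A).mulVecLin)
    (hwr₁a : MatLE 0 X₁)
    (hwr₁b : MatLE 0 (X₁ * R₁))
    (hwr₁c : MatLE (X₁ * S₁) 0)
    (hsplit₂ : A = P₂ - R₂ + S₂)
    (hrange₂ : LinearMap.range (P₂).mulVecLin = LinearMap.range (A).mulVecLin)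
    (hker₂ : LinearMap.ker (P₂).mulVecLin = LinearMap.ker (A).mulVecLin)
    (hwr₂a : MatLE 0 X₂)
    (hwr₂b : MatLE 0 (X₂ * R₂))
    (hwr₂c : MatLE (X₂ * S₂) 0)
    (hsplit₃ : A = P₃ - R₃ + S₃)
    (hrange₃ : LinearMap.range (P₃).mulVecLin = LinearMap.range (A).mulVecLin)
    (hker₃ : LinearMap.ker (P₃).mulVecLin = LinearMap.ker (A).mulVecLin)
    (hreg₃a : MatLE 0 X₃)
    (hreg₃b : MatLE 0 R₃)
    (hreg₃c : MatLE S₃ 0)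
    (hNS3 : LinearMap.ker (P₃).mulVecLin ≤ LinearMap.ker (S₃).mulVecLin)
    (hRS3 : LinearMap.range (S₃).mulVecLin ≤ LinearMap.range (P₃).mulVecLin)
    (hunit1 : IsUnit (1 - S₃ * X₁))
    (hunit2 : IsUnit (1 - S₃ * X₂))
    (hXhat1 : IsMP ((1 - S₃ * X₁) * A) Xhat₁)
    (hXhat2 : IsMP ((1 - S₃ * X₂) * A) Xhat₂)
    (hXhat1pos : MatLE 0 Xhat₁)
    (hXhat2pos : MatLE 0 Xhat₂)
    (hc1 : MatLE (X₃ * ((1 - S₃ * X₂) * A)) (X₃ * ((1 - S₃ * X₁) * A)))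
    (hc2 : MatLE (X₃ * (R₃ - S₃ * X₂ * R₂)) (X₃ * (R₃ - S₃ * X₁ * R₁)))
    : specRad (Matrix.fromBlocks (X₃ * R₃ - X₃ * S₃ * X₁ * R₁) (X₃ * S₃ * X₁ * S₁) 1 0) ≤ specRad (Matrix.fromBlocks (X₃ * R₃ - X₃ * S₃ * X₂ * R₂) (X₃ * S₃ * X₂ * S₂) 1 0) ∧ specRad (Matrix.fromBlocks (X₃ * R₃ - X₃ * S₃ * X₂ * R₂) (X₃ * S₃ * X₂ * S₂) 1 0) < 1 :=
  tgads_pair_comparison_W13_W23_induced_general A P₁ R₁ S₁ P₂ R₂ S₂ P₃ R₃ S₃ X₁ X₂ X₃ Xhat₂ hX₁ hX₂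
    hX₃ hsplit₁ hker₁ hwr₁b hwr₁c hsplit₂ hker₂ hwr₂b hwr₂c hsplit₃ hrange₃ hker₃ hreg₃a hreg₃b
    hreg₃c hNS3 hRS3 hunit2 hXhat2 hXhat2pos hc1 hc2
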